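/- Let n < m be positive integers and let α₁,…,αₙ, β_{n+1},…,β_m be positive integers with α₁+⋯+αₙ = β_{n+1}+⋯+β_m. Then the point (1,…,1,0,…,0) ∈ ℝ^m (with 1 repeated n times and 0 repeated m−n times) lies in the topological interior of the dilated polytope (n+1)Δ(α,β). -/
import Mathlib


open Pointwise

set_option maxHeartbeats 1000000 in
/-- the point (1,…,1,0,…,0) (n ones) is interior to (n+1)Δ(α,β). -/
theorem stmt_9 (n m : ℕ) (hn : 0 < n) (hnm : n < m)
    (α : Fin n → ℕ) (β : Fin (m - n) → ℕ)
    (hα : ∀ i, 0 < α i) (hβ : ∀ j, 0 < β j)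
    (hsum : ∑ i, α i = ∑ j, β j)
    (b : Fin m → ℝ)
    (hb : ∀ i : Fin m, b i = if h : (i : ℕ) < n then (α ⟨i, h⟩ : ℝ)
      else -(β ⟨(i : ℕ) - n, by have := i.isLt; omega⟩ : ℝ))
    (Δ : Set (Fin m → ℝ))
    (hΔ : Δ = convexHull ℝ
      ({0} ∪ Set.range (fun i : Fin m => Pi.single i (1 : ℝ)) ∪ {b})) :
    (fun i : Fin m => if (i : ℕ) < n then (1 : ℝ) else 0) ∈
      interior (((n : ℝ) + 1) • Δ) := by
  classical
  set S : ℝ := ∑ i, (α i : ℝ) with hSdef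
  have hnS : (n : ℝ) ≤ S := by
    calc (n : ℝ) = ∑ _i : Fin n, (1 : ℝ) := by simp
      _ ≤ S := Finset.sum_le_sum (fun i _ => by exact_mod_cast hα i)
  have hn1' : (1 : ℝ) ≤ (n : ℝ) := by exact_mod_cast hn
  have hS1 : (1 : ℝ) ≤ S := le_trans hn1' hnS
  have hSpos : (0 : ℝ) < S := by linarith
  have hn1 : (0 : ℝ) < (n : ℝ) + 1 := by positivity
  have hm1 : (1 : ℝ) ≤ (m : ℝ) := by exact_mod_cast Nat.one_le_of_lt hnm
  have hmpos : (0 : ℝ) < (m : ℝ) := by linarith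
  clear_value S
  set μ : ℝ := (4 * ((n : ℝ) + 1) * S)⁻¹ with hμdef
  have hμpos : 0 < μ := by positivity
  clear_value μ
  set δ : ℝ := min (((n : ℝ) + 1) * μ) ((2 * (m : ℝ))⁻¹) with hδdef
  have hδpos : 0 < δ := lt_min (by positivity) (by positivity)
  have hδ1 : δ ≤ ((n : ℝ) + 1) * μ := min_le_left _ _
  have hδ2 : δ ≤ (2 * (m : ℝ))⁻¹ := min_le_right _ _
  have hδhalf : δ ≤ 1 / 2 := by
    refine le_trans hδ2 ?_
    rw [inv_le_comm₀ (by positivity) (by norm_num)]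
    nlinarith
  clear_value δ
  -- auxiliary ℕ-indexed versions of α and β
  set A : ℕ → ℝ := fun k => if h : k < n then (α ⟨k, h⟩ : ℝ) else 0 with hA
  set B : ℕ → ℝ := fun k => if h : k < m - n then (β ⟨k, h⟩ : ℝ) else 0 with hB
  have hbA : ∀ i : Fin m, b i = if (i : ℕ) < n then A i else -B ((i : ℕ) - n) := by
    intro i
    rw [hb i]
    rcases lt_or_ge (i : ℕ) n with h | h
    · simp [hA, h]
    · have h1 : ¬ ((i : ℕ) < n) := not_lt.mpr h
      have h2 : (i : ℕ) - n < m - n := by have := i.isLt; omega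
      simp [hA, hB, h1, h2]
  have hbsum : ∑ i : Fin m, b i = 0 := by
    have e1 : ∑ i : Fin m, b i
        = ∑ k ∈ Finset.range m, (if k < n then A k else -B (k - n)) := by
      rw [← Fin.sum_univ_eq_sum_range (fun k => if k < n then A k else -B (k - n)) m]
      exact Finset.sum_congr rfl fun i _ => hbA i
    have e2 : ∑ k ∈ Finset.Ico 0 n, (if k < n then A k else -B (k - n))
        + ∑ k ∈ Finset.Ico n m, (if k < n then A k else -B (k - n))
        = ∑ k ∈ Finset.Ico 0 m, (if k < n then A k else -B (k - n)) :=
      Finset.sum_Ico_consecutive _ (Nat.zero_le n) hnm.le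
    have e3 : ∑ k ∈ Finset.Ico 0 n, (if k < n then A k else -B (k - n)) = S := by
      rw [show S = ∑ k ∈ Finset.range n, A k from ?_]
      · rw [Finset.range_eq_Ico]
        refine Finset.sum_congr rfl fun k hk => ?_
        have : k < n := (Finset.mem_Ico.mp hk).2
        simp [this]
      · rw [← Fin.sum_univ_eq_sum_range A n, hSdef]
        refine Finset.sum_congr rfl fun i _ => ?_
        simp [hA, i.isLt]
    have e4 : ∑ k ∈ Finset.Ico n m, (if k < n then A k else -B (k - n)) = -S := by
      have : ∑ k ∈ Finset.Ico n m, (if k < n then A k else -B (k - n))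
          = ∑ k ∈ Finset.range (m - n), -B k := by
        rw [Finset.sum_Ico_eq_sum_range]
        refine Finset.sum_congr rfl fun k _hk => ?_
        have h1 : ¬ (n + k < n) := by omega
        simp [h1]
      have hBS : ∑ k ∈ Finset.range (m - n), B k = S := by
        rw [← Fin.sum_univ_eq_sum_range B (m - n)]
        have h5 : ∑ i : Fin (m - n), B i = ∑ j, (β j : ℝ) := by
          refine Finset.sum_congr rfl fun i _ => ?_
          simp [hB, i.isLt]
        rw [h5, hSdef]
        exact_mod_cast congrArg (Nat.cast : ℕ → ℝ) hsum.symm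
      rw [this, ← hBS, ← Finset.sum_neg_distrib]
    rw [e1, Finset.range_eq_Ico, ← e2, e3, e4]
    ring
  -- interior via a metric ball
  rw [mem_interior]
  refine ⟨Metric.ball _ δ, ?_, Metric.isOpen_ball, Metric.mem_ball_self hδpos⟩
  intro q hq
  rw [Metric.mem_ball] at hq
  have hq' : ∀ i : Fin m, |q i - (if (i : ℕ) < n then (1 : ℝ) else 0)| < δ := by
    intro i
    have h := dist_le_pi_dist q
      (fun i : Fin m => if (i : ℕ) < n then (1 : ℝ) else 0) i
    simp only [Real.dist_eq] at h
    exact lt_of_le_of_lt h hq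
  set lam : Fin m → ℝ := fun i => ((n : ℝ) + 1)⁻¹ * q i - μ * b i with hlamdef
  clear_value lam
  have hlam0 : ∀ i : Fin m, 0 ≤ lam i := by
    intro i
    rcases lt_or_ge (i : ℕ) n with h | h
    · have hqi : 1 - δ < q i := by
        have := hq' i; rw [if_pos h] at this
        have := abs_lt.mp this; linarith [this.1]
      have hbi : b i = (α ⟨(i : ℕ), h⟩ : ℝ) := by rw [hb i]; simp [h]
      have hαS : (α ⟨(i : ℕ), h⟩ : ℝ) ≤ S := by
        rw [hSdef]
        exact Finset.single_le_sum (f := fun j : Fin n => (α j : ℝ))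
          (fun j _ => by positivity) (Finset.mem_univ _)
      have hμS : μ * S = (4 * ((n : ℝ) + 1))⁻¹ := by
        rw [hμdef, mul_inv, mul_assoc, inv_mul_cancel₀ hSpos.ne', mul_one]
      have h1 : μ * b i ≤ ((n : ℝ) + 1)⁻¹ / 4 := by
        have e : (4 * ((n : ℝ) + 1))⁻¹ = ((n : ℝ) + 1)⁻¹ / 4 := by
          rw [mul_inv]; ring
        rw [hbi, ← e, ← hμS]
        exact mul_le_mul_of_nonneg_left hαS hμpos.le
      have h2 : ((n : ℝ) + 1)⁻¹ * (1 / 2) ≤ ((n : ℝ) + 1)⁻¹ * q i :=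
        mul_le_mul_of_nonneg_left (by linarith) (by positivity)
      have h3 : (0 : ℝ) ≤ ((n : ℝ) + 1)⁻¹ := by positivity
      simp only [hlamdef]
      linarith
    · have hqi : -δ < q i := by
        have := hq' i; rw [if_neg (not_lt.mpr h)] at this
        have := abs_lt.mp this; linarith [this.1]
      have h2 : (i : ℕ) - n < m - n := by have := i.isLt; omega
      have hbi : b i = -(β ⟨(i : ℕ) - n, h2⟩ : ℝ) := by
        rw [hb i]; rw [dif_neg (not_lt.mpr h)]
      have hβ1 : (1 : ℝ) ≤ (β ⟨(i : ℕ) - n, h2⟩ : ℝ) := by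
        exact_mod_cast hβ _
      have key : δ * ((n : ℝ) + 1)⁻¹ ≤ μ * (β ⟨(i : ℕ) - n, h2⟩ : ℝ) := by
        calc δ * ((n : ℝ) + 1)⁻¹ ≤ (((n : ℝ) + 1) * μ) * ((n : ℝ) + 1)⁻¹ :=
              mul_le_mul_of_nonneg_right hδ1 (by positivity)
          _ = μ := by
              rw [mul_comm, ← mul_assoc, inv_mul_cancel₀ hn1.ne', one_mul]
          _ ≤ μ * (β ⟨(i : ℕ) - n, h2⟩ : ℝ) := by nlinarith
      simp only [hlamdef, hbi]
      have : -(((n : ℝ) + 1)⁻¹ * δ) ≤ ((n : ℝ) + 1)⁻¹ * q i :=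
        by nlinarith [inv_pos.mpr hn1]
      nlinarith [inv_pos.mpr hn1]
  have hqsum : ∑ i : Fin m, q i ≤ (n : ℝ) + (m : ℝ) * δ := by
    have hpsum : ∑ i : Fin m, (if (i : ℕ) < n then (1 : ℝ) else 0) = n := by
      rw [Fin.sum_univ_eq_sum_range (fun k => if k < n then (1 : ℝ) else 0) m,
        Finset.range_eq_Ico,
        ← Finset.sum_Ico_consecutive _ (Nat.zero_le n) hnm.le]
      have e1 : ∑ k ∈ Finset.Ico 0 n, (if k < n then (1 : ℝ) else 0) = n := by
        rw [Finset.sum_congr rfl (fun k hk => if_pos (Finset.mem_Ico.mp hk).2)]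
        simp
      have e2 : ∑ k ∈ Finset.Ico n m, (if k < n then (1 : ℝ) else 0) = 0 := by
        rw [Finset.sum_congr rfl
          (fun k hk => if_neg (not_lt.mpr (Finset.mem_Ico.mp hk).1))]
        simp
      rw [e1, e2]; ring
    calc ∑ i : Fin m, q i
        ≤ ∑ i : Fin m, ((if (i : ℕ) < n then (1 : ℝ) else 0) + δ) := by
          refine Finset.sum_le_sum fun i _ => ?_
          have := abs_lt.mp (hq' i); linarith [this.2]
      _ = (n : ℝ) + (m : ℝ) * δ := by
          rw [Finset.sum_add_distrib, hpsum, Finset.sum_const, Finset.card_univ,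
            Fintype.card_fin, nsmul_eq_mul]
  have hlamsum : ∑ i : Fin m, lam i = ((n : ℝ) + 1)⁻¹ * ∑ i : Fin m, q i := by
    simp only [hlamdef]
    rw [Finset.sum_sub_distrib, ← Finset.mul_sum, ← Finset.mul_sum, hbsum]
    ring
  have hrest : ∑ i : Fin m, lam i + μ ≤ 1 := by
    have hmδ : (m : ℝ) * δ ≤ 1 / 2 := by
      calc (m : ℝ) * δ ≤ (m : ℝ) * (2 * (m : ℝ))⁻¹ :=
            mul_le_mul_of_nonneg_left hδ2 (by positivity)
        _ = 1 / 2 := by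
            rw [mul_inv, ← mul_assoc, mul_comm (m : ℝ) ((2 : ℝ)⁻¹),
              mul_assoc, mul_inv_cancel₀ hmpos.ne', mul_one]
            norm_num
    have hnμ : ((n : ℝ) + 1) * μ ≤ 1 / 4 := by
      rw [hμdef]
      rw [show (4 * ((n : ℝ) + 1) * S)⁻¹ = ((n : ℝ) + 1)⁻¹ * (4 * S)⁻¹ by
        rw [show 4 * ((n : ℝ) + 1) * S = ((n : ℝ) + 1) * (4 * S) by ring, mul_inv]]
      calc ((n : ℝ) + 1) * (((n : ℝ) + 1)⁻¹ * (4 * S)⁻¹)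
          = (4 * S)⁻¹ := by rw [← mul_assoc, mul_inv_cancel₀ hn1.ne', one_mul]
        _ ≤ 1 / 4 := by
            rw [show (1 : ℝ) / 4 = (4 : ℝ)⁻¹ by norm_num]
            apply inv_anti₀ (by norm_num); nlinarith
    have h1 : ∑ i : Fin m, q i ≤ (n : ℝ) + 1 / 2 := by linarith
    rw [hlamsum]
    have h2 : ((n : ℝ) + 1)⁻¹ * ∑ i : Fin m, q i
        ≤ ((n : ℝ) + 1)⁻¹ * ((n : ℝ) + 1 / 2) :=
      mul_le_mul_of_nonneg_left h1 (by positivity)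
    have h3 : ((n : ℝ) + 1)⁻¹ * ((n : ℝ) + 1 / 2) = 1 - ((n : ℝ) + 1)⁻¹ * (1 / 2) := by
      have hc := mul_inv_cancel₀ hn1.ne'
      nlinarith [hc]
    have h4 : μ ≤ ((n : ℝ) + 1)⁻¹ * (1 / 2) := by
      have : μ = ((n : ℝ) + 1)⁻¹ * (((n : ℝ) + 1) * μ) := by
        rw [← mul_assoc, inv_mul_cancel₀ hn1.ne', one_mul]
      rw [this]
      refine mul_le_mul_of_nonneg_left ?_ (by positivity)
      linarith
    linarith
  -- membership in the hull
  rw [Set.mem_smul_set_iff_inv_smul_mem₀ (by positivity : ((n : ℝ) + 1) ≠ 0), hΔ]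
  set T : Set (Fin m → ℝ) :=
    ({0} ∪ Set.range (fun i : Fin m => Pi.single i (1 : ℝ)) ∪ {b}) with hT
  set w : (Fin m ⊕ Bool) → ℝ :=
    Sum.elim lam (fun t => if t then μ else 1 - (∑ i : Fin m, lam i) - μ) with hw
  set z : (Fin m ⊕ Bool) → (Fin m → ℝ) :=
    Sum.elim (fun i => Pi.single i (1 : ℝ)) (fun t => if t then b else 0) with hz
  have hrepr : (((n : ℝ) + 1)⁻¹ • q) = ∑ i : Fin m ⊕ Bool, w i • z i := by
    rw [Fintype.sum_sum_type, Fintype.sum_bool]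
    funext j
    simp only [hw, hz, Sum.elim_inl, Sum.elim_inr, if_pos, if_neg,
      Pi.add_apply, Pi.smul_apply, Finset.sum_apply, smul_eq_mul,
      Pi.single_apply]
    rw [Finset.sum_congr rfl (fun i _ => by
      rw [mul_ite, mul_one, mul_zero] :
      ∀ i ∈ Finset.univ, lam i * (if j = i then (1:ℝ) else 0)
        = if j = i then lam i else 0)]
    rw [Finset.sum_ite_eq Finset.univ j lam, if_pos (Finset.mem_univ j)]
    simp only [hlamdef, Pi.zero_apply, mul_zero, if_true, Bool.false_eq_true,
      if_false]
    ring
  rw [hrepr]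
  refine (convex_convexHull ℝ T).sum_mem ?_ ?_ ?_
  · rintro (i | t) _
    · exact hlam0 i
    · rcases t with _ | _
      · simpa [hw] using by linarith
      · simpa [hw] using hμpos.le
  · rw [Fintype.sum_sum_type, Fintype.sum_bool]
    simp only [hw, Sum.elim_inl, Sum.elim_inr, if_true, Bool.false_eq_true, if_false]
    ring
  · rintro (i | t) _
    · exact subset_convexHull ℝ T (by
        rw [hT]; left; right; exact ⟨i, rfl⟩)
    · rcases t with _ | _
      · exact subset_convexHull ℝ T (by rw [hT]; left; left; rfl)
      · exact subset_convexHull ℝ T (by rw [hT]; right; rfl)
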